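/- Let μ be a compactly supported probability measure on ℝ, σ > 0, and p_σ(x) = ∫ φ_σ(x − z) dμ(z). For x ∈ ℝ, let K_x(t) = log ∫ exp(t·z) dν_{σ,x}(z) be the cumulant generating function of the posterior ν_{σ,x}, and let κ_n(ν_{σ,x}) = K_x^{(n)}(0) be its n-th cumulant. Then for every n ≥ 3 and every x ∈ ℝ, the n-th derivative of log p_σ at x satisfies (d/dx)^n log p_σ(x) = κ_n(ν_{σ,x}) / σ^{2n}. -/

import Mathlib

open MeasureTheory Filter Real
open scoped ENNReal NNReal

/-- The one-dimensional Gaussian density `φ_σ(w) = (2πσ²)^{-1/2} exp(-w²/(2σ²))`. -/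
noncomputable def gaussDensity1 (σ : ℝ) (w : ℝ) : ℝ :=
  (2 * π * σ ^ 2) ^ (-(1 : ℝ) / 2) * Real.exp (-w ^ 2 / (2 * σ ^ 2))

/-- The posterior law `ν_{σ,x}(A) = (∫_A φ_σ(x - z) dμ(z)) / p_σ(x)` on `ℝ`. -/
noncomputable def posterior1 (μ : Measure ℝ) (σ : ℝ) (x : ℝ) : Measure ℝ :=
  (ENNReal.ofReal (∫ z, gaussDensity1 σ (x - z) ∂μ))⁻¹ •
    μ.withDensity fun z => ENNReal.ofReal (gaussDensity1 σ (x - z))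

/- auxiliary lemmas -/

lemma aux_integrable (ν : Measure ℝ) [IsFiniteMeasure ν] {R : ℝ}
    (hae : ∀ᵐ z ∂ν, |z| ≤ R) (k : ℕ) (t : ℝ) :
    Integrable (fun z => z ^ k * Real.exp (t * z)) ν := by
  apply Integrable.mono' (integrable_const (R ^ k * Real.exp (|t| * R)))
  · exact ((continuous_pow k).mul (by fun_prop)).aestronglyMeasurable
  · filter_upwards [hae] with z hz
    rw [norm_mul, norm_pow, Real.norm_eq_abs, Real.norm_eq_abs, Real.abs_exp]
    have h1 : |z| ^ k ≤ R ^ k := pow_le_pow_left₀ (abs_nonneg z) hz k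
    have h2 : Real.exp (t * z) ≤ Real.exp (|t| * R) := by
      apply Real.exp_le_exp.2
      calc t * z ≤ |t * z| := le_abs_self _
        _ = |t| * |z| := abs_mul t z
        _ ≤ |t| * R := mul_le_mul_of_nonneg_left hz (abs_nonneg t)
    exact mul_le_mul h1 h2 (Real.exp_pos _).le (pow_nonneg (le_trans (abs_nonneg z) hz) k)

lemma aux_hasDerivAt (ν : Measure ℝ) [IsFiniteMeasure ν] {R : ℝ}
    (hae : ∀ᵐ z ∂ν, |z| ≤ R) (hR : 0 ≤ R) (k : ℕ) (t₀ : ℝ) :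
    HasDerivAt (fun t => ∫ z, z ^ k * Real.exp (t * z) ∂ν)
      (∫ z, z ^ (k + 1) * Real.exp (t₀ * z) ∂ν) t₀ := by
  have := hasDerivAt_integral_of_dominated_loc_of_deriv_le
    (F := fun t (z : ℝ) => z ^ k * Real.exp (t * z))
    (F' := fun t (z : ℝ) => z ^ (k + 1) * Real.exp (t * z))
    (bound := fun _ => R ^ (k + 1) * Real.exp ((|t₀| + 1) * R)) (μ := ν) (s := Metric.ball t₀ 1) (Metric.ball_mem_nhds t₀ one_pos)
    (Eventually.of_forall fun t =>
      ((continuous_pow k).mul (by fun_prop)).aestronglyMeasurable)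
    (aux_integrable ν hae k t₀)
    (((continuous_pow (k + 1)).mul (by fun_prop)).aestronglyMeasurable)
    ?_ (integrable_const _) ?_
  · exact this.2
  · filter_upwards [hae] with z hz
    intro u hu
    have hu' : |u| ≤ |t₀| + 1 := by
      calc |u| = |t₀ + (u - t₀)| := by ring_nf
        _ ≤ |t₀| + |u - t₀| := abs_add_le _ _
        _ ≤ |t₀| + 1 := by
            have := (Metric.mem_ball.1 hu).le
            rw [Real.dist_eq] at this
            linarith
    rw [norm_mul, norm_pow, Real.norm_eq_abs, Real.norm_eq_abs, Real.abs_exp]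
    have h1 : |z| ^ (k + 1) ≤ R ^ (k + 1) := pow_le_pow_left₀ (abs_nonneg z) hz _
    have h2 : Real.exp (u * z) ≤ Real.exp ((|t₀| + 1) * R) := by
      apply Real.exp_le_exp.2
      calc u * z ≤ |u * z| := le_abs_self _
        _ = |u| * |z| := abs_mul u z
        _ ≤ (|t₀| + 1) * R := mul_le_mul hu' hz (abs_nonneg z) (by positivity)
    exact mul_le_mul h1 h2 (Real.exp_pos _).le (pow_nonneg hR _)
  · apply Eventually.of_forall
    intro z u _
    have h : HasDerivAt (fun u => Real.exp (u * z)) (Real.exp (u * z) * z) u :=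
      (hasDerivAt_mul_const z).exp
    have := h.const_mul (z ^ k)
    convert this using 1
    · rfl
    ring

lemma aux_contDiff (ν : Measure ℝ) [IsFiniteMeasure ν] {R : ℝ}
    (hae : ∀ᵐ z ∂ν, |z| ≤ R) (hR : 0 ≤ R) :
    ∀ n k : ℕ, ContDiff ℝ n (fun t => ∫ z, z ^ k * Real.exp (t * z) ∂ν) := by
  intro n
  induction n with
  | zero =>
    intro k
    rw [show ((0 : ℕ) : WithTop ℕ∞) = 0 from rfl, contDiff_zero]
    exact continuous_iff_continuousAt.2 fun t => (aux_hasDerivAt ν hae hR k t).continuousAt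
  | succ n ih =>
    intro k
    rw [show ((n + 1 : ℕ) : WithTop ℕ∞) = (n : ℕ) + 1 by push_cast; rfl,
      contDiff_succ_iff_deriv]
    refine ⟨fun t => (aux_hasDerivAt ν hae hR k t).differentiableAt, ?_, ?_⟩
    · intro h
      exact absurd h (by simp)
    · have hd : deriv (fun t => ∫ z, z ^ k * Real.exp (t * z) ∂ν)
          = fun t => ∫ z, z ^ (k + 1) * Real.exp (t * z) ∂ν :=
        funext fun t => (aux_hasDerivAt ν hae hR k t).deriv
      rw [hd]
      exact ih (k + 1)

lemma aux_iteratedDeriv_add {n : ℕ} {f g : ℝ → ℝ} (hf : ContDiff ℝ n f)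
    (hg : ContDiff ℝ n g) (x : ℝ) :
    iteratedDeriv n (fun y => f y + g y) x = iteratedDeriv n f x + iteratedDeriv n g x := by
  simp only [← iteratedDerivWithin_univ]
  exact iteratedDerivWithin_add (Set.mem_univ x) uniqueDiffOn_univ
    hf.contDiffWithinAt hg.contDiffWithinAt

lemma aux_iteratedDeriv_zero_fun (m : ℕ) (x : ℝ) :
    iteratedDeriv m (fun _ : ℝ => (0 : ℝ)) x = 0 := by
  induction m generalizing x with
  | zero => simp
  | succ m ih =>
    rw [iteratedDeriv_succ', show deriv (fun _ : ℝ => (0:ℝ)) = fun _ : ℝ => (0:ℝ) from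
      funext fun y => deriv_const y 0]
    exact ih x

/-- **Higher cumulants of the denoising posterior.** For a compactly supported probability
measure `μ` on `ℝ`, `σ > 0` and `p_σ(x) = ∫ φ_σ(x - z) dμ(z)`, let
`K_x(t) = log ∫ exp(t z) dν_{σ,x}(z)` be the cumulant generating function of the posterior
`ν_{σ,x}` and `κ_n(ν_{σ,x}) = K_x⁽ⁿ⁾(0)` its `n`-th cumulant. Then for every `n ≥ 3` and
every `x`, `(d/dx)ⁿ log p_σ(x) = κ_n(ν_{σ,x}) / σ^{2n}`. -/
theorem log_density_deriv_eq_cumulant (μ : Measure ℝ) [IsProbabilityMeasure μ]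
    (K : Set ℝ) (hK : IsCompact K) (hμK : μ Kᶜ = 0)
    (σ : ℝ) (hσ : 0 < σ)
    (p : ℝ → ℝ) (hp : ∀ x, p x = ∫ z, gaussDensity1 σ (x - z) ∂μ)
    (cgf : ℝ → ℝ → ℝ)
    (hcgf : ∀ x t, cgf x t = Real.log (∫ z, Real.exp (t * z) ∂(posterior1 μ σ x))) :
    ∀ n : ℕ, 3 ≤ n → ∀ x : ℝ,
      iteratedDeriv n (fun y => Real.log (p y)) x
        = iteratedDeriv n (cgf x) 0 / σ ^ (2 * n) := by
  have hσ2 : (0:ℝ) < σ ^ 2 := by positivity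
  set A : ℝ := (2 * π * σ ^ 2) ^ (-(1 : ℝ) / 2) with hA_def
  have hA : 0 < A := by
    apply Real.rpow_pos_of_pos
    positivity
  have hgpos : ∀ w, 0 < gaussDensity1 σ w := fun w => mul_pos hA (Real.exp_pos _)
  have hgle : ∀ w, gaussDensity1 σ w ≤ A := by
    intro w
    have : Real.exp (-w ^ 2 / (2 * σ ^ 2)) ≤ 1 := by
      rw [Real.exp_le_one_iff]
      apply div_nonpos_of_nonpos_of_nonneg
      · simp [sq_nonneg w]
      · positivity
    calc gaussDensity1 σ w = A * Real.exp (-w ^ 2 / (2 * σ ^ 2)) := rfl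
      _ ≤ A * 1 := by nlinarith [Real.exp_pos (-w ^ 2 / (2 * σ ^ 2))]
      _ = A := mul_one A
  -- radius
  obtain ⟨R₀, hR₀⟩ := (Metric.isBounded_iff_subset_closedBall 0).1 hK.isBounded
  set R : ℝ := max R₀ 0 with hR_def
  have hR0 : 0 ≤ R := le_max_right _ _
  have hKR : ∀ z ∈ K, |z| ≤ R := by
    intro z hz
    have := hR₀ hz
    rw [Metric.mem_closedBall, Real.dist_eq, sub_zero] at this
    exact this.trans (le_max_left _ _)
  have haeK : ∀ᵐ z ∂μ, z ∈ K := by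
    rw [ae_iff]
    exact hμK
  have hμbdd : ∀ᵐ z ∂μ, |z| ≤ R := by filter_upwards [haeK] with z hz using hKR z hz
  -- integrability of gaussians against μ
  have hcontg : ∀ y : ℝ, Continuous fun z => gaussDensity1 σ (y - z) := by
    intro y; unfold gaussDensity1; fun_prop
  have int_gauss : ∀ y, Integrable (fun z => gaussDensity1 σ (y - z)) μ := by
    intro y
    apply Integrable.mono' (integrable_const A) (hcontg y).aestronglyMeasurable
    filter_upwards with z
    rw [Real.norm_eq_abs, abs_of_pos (hgpos _)]
    exact hgle _
  have ppos : ∀ y, 0 < p y := by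
    intro y
    rw [hp y]
    rw [integral_pos_iff_support_of_nonneg (fun z => (hgpos _).le) (int_gauss y)]
    have : Function.support (fun z => gaussDensity1 σ (y - z)) = Set.univ :=
      Set.eq_univ_of_forall fun z => (hgpos _).ne'
    rw [this]
    simp
  intro n hn x
  set ν : Measure ℝ := posterior1 μ σ x with hν_def
  -- key transfer of integrals
  have hmeasg : Measurable fun z => Real.toNNReal (gaussDensity1 σ (x - z)) :=
    (continuous_real_toNNReal.comp (hcontg x)).measurable
  have key_int : ∀ f : ℝ → ℝ,
      ∫ z, f z ∂ν = (p x)⁻¹ * ∫ z, gaussDensity1 σ (x - z) * f z ∂μ := by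
    intro f
    rw [hν_def]
    unfold posterior1
    rw [integral_smul_measure]
    rw [show (fun z => ENNReal.ofReal (gaussDensity1 σ (x - z)))
        = fun z => ((Real.toNNReal (gaussDensity1 σ (x - z)) : ℝ≥0) : ℝ≥0∞) from rfl]
    rw [integral_withDensity_eq_integral_smul hmeasg]
    rw [← hp x, ENNReal.toReal_inv, ENNReal.toReal_ofReal (ppos x).le]
    rw [smul_eq_mul]
    congr 1
    apply integral_congr_ae
    filter_upwards with z
    rw [NNReal.smul_def, Real.coe_toNNReal _ (hgpos _).le, smul_eq_mul]
  -- ν is a probability measure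
  have hlint : ∫⁻ z, ENNReal.ofReal (gaussDensity1 σ (x - z)) ∂μ = ENNReal.ofReal (p x) := by
    rw [hp x]
    exact (ofReal_integral_eq_lintegral_ofReal (int_gauss x)
      (Eventually.of_forall fun z => (hgpos _).le)).symm
  haveI hν_prob : IsProbabilityMeasure ν := by
    constructor
    rw [hν_def]
    unfold posterior1
    rw [Measure.smul_apply, withDensity_apply _ MeasurableSet.univ, setLIntegral_univ,
      hlint, ← hp x, smul_eq_mul]
    exact ENNReal.inv_mul_cancel (ENNReal.ofReal_pos.2 (ppos x)).ne' ENNReal.ofReal_ne_top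
  have hνK : ν Kᶜ = 0 := by
    rw [hν_def]
    unfold posterior1
    rw [Measure.smul_apply, withDensity_apply _ hK.isClosed.measurableSet.compl,
      Measure.restrict_eq_zero.2 hμK]
    simp
  have hνbdd : ∀ᵐ z ∂ν, |z| ≤ R := by
    have : ∀ᵐ z ∂ν, z ∈ K := by rw [ae_iff]; exact hνK
    filter_upwards [this] with z hz using hKR z hz
  -- MGF of ν
  set M : ℝ → ℝ := (fun t => ∫ z, Real.exp (t * z) ∂ν) with hM_def
  have hMint : ∀ t, Integrable (fun z => Real.exp (t * z)) ν := by
    intro t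
    have := aux_integrable ν hνbdd 0 t
    simpa using this
  have hMpos : ∀ t, 0 < M t := by
    intro t
    rw [hM_def]
    rw [integral_pos_iff_support_of_nonneg (fun z => (Real.exp_pos _).le) (hMint t)]
    have : Function.support (fun z => Real.exp (t * z)) = Set.univ :=
      Set.eq_univ_of_forall fun z => (Real.exp_pos _).ne'
    rw [this]
    simp
  have hMsmooth : ContDiff ℝ n M := by
    have := aux_contDiff ν hνbdd hR0 n 0
    simpa using this
  have hcgf_eq : cgf x = fun t => Real.log (M t) := funext fun t => hcgf x t
  have hg : ContDiff ℝ n (cgf x) := by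
    rw [hcgf_eq]
    exact hMsmooth.log fun t => (hMpos t).ne'
  -- master identity
  set a : ℝ := -1 / (2 * σ ^ 2) with ha_def
  set b : ℝ := -x / σ ^ 2 with hb_def
  set c : ℝ := Real.log (p x) with hc_def
  set d : ℝ := (σ ^ 2)⁻¹ with hd_def
  have master : ∀ y, Real.log (p y)
      = (a * (y - x) ^ 2 + (b * (y - x) + c)) + cgf x (d * (y + -x)) := by
    intro y
    set t : ℝ := d * (y + -x) with ht_def
    have htd : t = (y - x) / σ ^ 2 := by
      rw [ht_def, hd_def]
      field_simp
      ring
    have hgz : ∀ z, gaussDensity1 σ (y - z)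
        = Real.exp (b * (y - x) + a * (y - x) ^ 2)
          * (gaussDensity1 σ (x - z) * Real.exp (t * z)) := by
      intro z
      unfold gaussDensity1
      rw [← hA_def, htd]
      have hexp : -(y - z) ^ 2 / (2 * σ ^ 2)
          = (b * (y - x) + a * (y - x) ^ 2)
            + (-(x - z) ^ 2 / (2 * σ ^ 2) + ((y - x) / σ ^ 2) * z) := by
        rw [hb_def, ha_def]
        field_simp
        ring
      rw [hexp]
      simp only [Real.exp_add]
      ring
    have hInt2 : Integrable (fun z => gaussDensity1 σ (x - z) * Real.exp (t * z)) μ := by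
      apply Integrable.mono' (integrable_const (A * Real.exp (|t| * R)))
      · exact ((hcontg x).mul (by fun_prop)).aestronglyMeasurable
      · filter_upwards [hμbdd] with z hz
        rw [Real.norm_eq_abs, abs_mul, abs_of_pos (hgpos _), Real.abs_exp]
        apply mul_le_mul (hgle _) _ (Real.exp_pos _).le hA.le
        apply Real.exp_le_exp.2
        calc t * z ≤ |t * z| := le_abs_self _
          _ = |t| * |z| := abs_mul t z
          _ ≤ |t| * R := mul_le_mul_of_nonneg_left hz (abs_nonneg t)
    have hpy : p y = Real.exp (b * (y - x) + a * (y - x) ^ 2) * (p x * M t) := by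
      have h1 : p y = ∫ z, Real.exp (b * (y - x) + a * (y - x) ^ 2)
          * (gaussDensity1 σ (x - z) * Real.exp (t * z)) ∂μ := by
        rw [hp y]
        exact integral_congr_ae (Eventually.of_forall fun z => hgz z)
      rw [h1, integral_const_mul]
      congr 1
      have h2 : M t = (p x)⁻¹ * ∫ z, gaussDensity1 σ (x - z) * Real.exp (t * z) ∂μ :=
        key_int _
      rw [h2, ← mul_assoc, mul_inv_cancel₀ (ppos x).ne', one_mul]
    rw [hpy, Real.log_mul (Real.exp_ne_zero _) (mul_pos (ppos x) (hMpos t)).ne',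
      Real.log_exp, Real.log_mul (ppos x).ne' (hMpos t).ne']
    have : cgf x t = Real.log (M t) := hcgf x t
    rw [this, ← hc_def]
    ring
  -- rewrite the function
  have hfun : (fun y => Real.log (p y))
      = fun y => (a * (y - x) ^ 2 + (b * (y - x) + c)) + cgf x (d * (y + -x)) :=
    funext master
  rw [hfun]
  -- smoothness of the two pieces
  have hQ : ContDiff ℝ n (fun y : ℝ => a * (y - x) ^ 2 + (b * (y - x) + c)) := by
    apply ContDiff.add
    · exact contDiff_const.mul ((contDiff_id.sub contDiff_const).pow 2)
    · exact (contDiff_const.mul (contDiff_id.sub contDiff_const)).add contDiff_const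
  have hG : ContDiff ℝ n (fun y : ℝ => cgf x (d * (y + -x))) :=
    hg.comp (contDiff_const.mul (contDiff_id.add contDiff_const))
  rw [aux_iteratedDeriv_add hQ hG x]
  -- quadratic part vanishes
  have hQzero : iteratedDeriv n (fun y : ℝ => a * (y - x) ^ 2 + (b * (y - x) + c)) x = 0 := by
    obtain ⟨m, rfl⟩ := Nat.exists_eq_add_of_le hn
    have hd1 : deriv (fun y : ℝ => a * (y - x) ^ 2 + (b * (y - x) + c))
        = fun y : ℝ => a * (2 * (y - x)) + b := by
      funext y
      have h1 : HasDerivAt (fun y : ℝ => y - x) 1 y := (hasDerivAt_id y).sub_const x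
      have h2 : HasDerivAt (fun y : ℝ => (y - x) ^ 2) ((2 : ℕ) * (y - x) ^ 1 * 1) y :=
        h1.pow 2
      have h3 := (h2.const_mul a).add ((h1.const_mul b).add_const c)
      have h4 : deriv (fun y : ℝ => a * (y - x) ^ 2 + (b * (y - x) + c)) y = _ := h3.deriv
      rw [h4]
      push_cast
      ring
    have hd2 : deriv (fun y : ℝ => a * (2 * (y - x)) + b) = fun _ : ℝ => 2 * a := by
      funext y
      have h1 : HasDerivAt (fun y : ℝ => y - x) 1 y := (hasDerivAt_id y).sub_const x
      have h3 := ((h1.const_mul 2).const_mul a).add_const b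
      rw [h3.deriv]
      ring
    have hd3 : deriv (fun _ : ℝ => 2 * a) = fun _ : ℝ => (0 : ℝ) :=
      funext fun y => deriv_const y (2 * a)
    rw [show 3 + m = m + 1 + 1 + 1 by ring]
    rw [iteratedDeriv_succ', hd1, iteratedDeriv_succ', hd2, iteratedDeriv_succ', hd3]
    exact aux_iteratedDeriv_zero_fun m x
  rw [hQzero, zero_add]
  -- composition part
  have hcomp := iteratedDeriv_comp_add_const n (fun w => cgf x (d * w)) (-x)
  have h1 : iteratedDeriv n (fun y : ℝ => cgf x (d * (y + -x))) x
      = iteratedDeriv n (fun w => cgf x (d * w)) (x + -x) := congrFun hcomp x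
  rw [h1, add_neg_cancel]
  have h2 := iteratedDeriv_comp_const_mul hg d
  rw [congrFun h2 0, mul_zero]
  rw [hd_def]
  rw [pow_mul]
  field_simp
  rw [one_div, inv_pow, mul_comm, ← mul_assoc, mul_inv_cancel₀ (by positivity), one_mul]
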